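/- Joining two blue half-paths (even k): let k ≥ 4 be even, and suppose the board contains two vertex-disjoint blue paths P and Q, each on k/2 vertices, with chosen endpoints p of P and q of Q. Then within k rounds Builder can force either a red C_k or a blue path on at least k/2 vertices of V(P) ∪ V(Q) whose endpoints are p and q. -/

import Mathlib

open SimpleGraph

/-- A board state: the set of red edges and the set of blue edges. -/
abbrev Board : Type := Set (Sym2 ℕ) × Set (Sym2 ℕ)

/-- The set of already colored edges of a board. -/
def Board.colored (B : Board) : Set (Sym2 ℕ) := B.1 ∪ B.2

/-- A Builder strategy selects an edge given the current board. -/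
abbrev BuilderStrat : Type := Board → Sym2 ℕ

/-- A Painter strategy colors the selected edge (true = red, false = blue). -/
abbrev PainterStrat : Type := Board → Sym2 ℕ → Bool

/-- The board after `t` rounds of play from `init`. -/
def playGame (b : BuilderStrat) (p : PainterStrat) (init : Board) : ℕ → Board
  | 0 => init
  | t + 1 =>
      let B := playGame b p init t
      let e := b B
      if p B e then (insert e B.1, B.2) else (B.1, insert e B.2)

/-- Builder's strategy is valid from `init`: along any play it always selects a
previously unselected non-loop edge. -/
def ValidFrom (b : BuilderStrat) (init : Board) : Prop :=
  ∀ p : PainterStrat, ∀ t : ℕ,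
    ¬ (b (playGame b p init t)).IsDiag ∧
      b (playGame b p init t) ∉ (playGame b p init t).colored

/-- Builder can force the winning condition `W` within `t` rounds, starting from `init`. -/
def BuilderWinsIn (init : Board) (W : Board → Prop) (t : ℕ) : Prop :=
  ∃ b : BuilderStrat, ValidFrom b init ∧
    ∀ p : PainterStrat, ∃ s, s ≤ t ∧ W (playGame b p init s)

/-- `G` contains a copy of `H`. -/
def HasCopy {α β : Type} (H : SimpleGraph α) (G : SimpleGraph β) : Prop :=
  ∃ f : α ↪ β, ∀ x y, H.Adj x y → G.Adj (f x) (f y)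

/-- The red part of the board contains a copy of `H`. -/
def RedCopy {α : Type} (H : SimpleGraph α) (B : Board) : Prop :=
  HasCopy H (fromEdgeSet B.1)

/-- The blue part of the board contains a copy of `H`. -/
def BlueCopy {α : Type} (H : SimpleGraph α) (B : Board) : Prop :=
  HasCopy H (fromEdgeSet B.2)

/-- The empty board. -/
def emptyBoard : Board := (∅, ∅)

/-- Winning condition: a red `C_k` or a blue `C_n`. -/
def WinCC (k n : ℕ) (B : Board) : Prop :=
  RedCopy (cycleGraph k) B ∨ BlueCopy (cycleGraph n) B

/-- Winning condition: a red `C_k` or a blue path on `n` vertices. -/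
def WinCP (k n : ℕ) (B : Board) : Prop :=
  RedCopy (cycleGraph k) B ∨ BlueCopy (pathGraph n) B

/-- A board consisting of a single blue cycle on the vertices `0, …, m-1`. -/
def blueCycleBoard (m : ℕ) : Board :=
  (∅, {e | ∃ i : ℕ, i < m ∧ e = s(i, (i + 1) % m)})

/-- A board consisting of a single blue path on the vertices `0, …, m-1`. -/
def bluePathBoard (m : ℕ) : Board :=
  (∅, {e | ∃ i : ℕ, i + 1 < m ∧ e = s(i, i + 1)})

/-!
Let `m = k / 2`, `P = u₀ … u_{m-1}` and `Q = v₀ … v_{m-1}`, so that `p = u_{m-1}` and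
`q = v_{m-1}`. Builder asks, one after the other, the `k` edges of the alternating cycle
`v₀ u_{m-1} v₁ u_{m-2} … v_{m-1} u₀`. If Painter colours all of them red, they form a red `C_k`.
Otherwise some edge `u_a v_b` of the cycle is blue; every such edge has `a + b ≤ m`, so
`u_{m-1} … u_a v_b … v_{m-1}` is a blue path from `p` to `q` on `2m - a - b ≥ m` vertices.
-/

open Function Set

theorem Fin.val_add_one_eq_ite {n : ℕ} [NeZero n] (i : Fin n) :
    (i + 1).val = if i.val + 1 = n then 0 else i.val + 1 := by
  rw [Fin.val_add, Fin.val_one', Nat.add_mod_mod]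
  split_ifs with h
  · rw [h, Nat.mod_self]
  · exact Nat.mod_eq_of_lt (by omega)

theorem Fin.ne_add_one {n : ℕ} [NeZero n] (hn : 2 ≤ n) (i : Fin n) : i ≠ i + 1 := by
  rw [Ne, Fin.ext_iff, Fin.val_add_one_eq_ite]
  split_ifs <;> omega

theorem Fin.eq_add_one_of_val_sub_eq_one {n : ℕ} [NeZero n] {i j : Fin n}
    (h : (i - j).val = 1) : i = j + 1 := by
  have hn : 1 < n := h ▸ (i - j).isLt
  rw [← sub_eq_iff_eq_add']
  exact Fin.ext (by rw [h, Fin.val_one', Nat.mod_eq_of_lt hn])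

section Game

variable {b : BuilderStrat} {p : PainterStrat} {init : Board}

theorem BuilderWinsIn.mono {W W' : Board → Prop} {t : ℕ} (h : BuilderWinsIn init W t)
    (hW : ∀ B, W B → W' B) : BuilderWinsIn init W' t := by
  obtain ⟨b, hb, hwin⟩ := h
  refine ⟨b, hb, fun p => ?_⟩
  obtain ⟨s, hs, hW'⟩ := hwin p
  exact ⟨s, hs, hW _ hW'⟩

theorem mem_fst_playGame_succ {t : ℕ}
    (h : p (playGame b p init t) (b (playGame b p init t)) = true) :
    b (playGame b p init t) ∈ (playGame b p init (t + 1)).1 := by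
  simp only [playGame, h, if_true, mem_insert_iff, true_or]

theorem mem_snd_playGame_succ {t : ℕ}
    (h : p (playGame b p init t) (b (playGame b p init t)) = false) :
    b (playGame b p init t) ∈ (playGame b p init (t + 1)).2 := by
  simp only [playGame, h, Bool.false_eq_true, if_false, mem_insert_iff, true_or]

theorem playGame_fst_mono : Monotone fun t => (playGame b p init t).1 :=
  monotone_nat_of_le_succ fun t => by
    simp only [playGame]
    split_ifs
    exacts [subset_insert _ _, le_rfl]

theorem playGame_snd_mono : Monotone fun t => (playGame b p init t).2 :=
  monotone_nat_of_le_succ fun t => by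
    simp only [playGame]
    split_ifs
    exacts [le_rfl, subset_insert _ _]

theorem colored_playGame_succ (t : ℕ) :
    (playGame b p init (t + 1)).colored =
      insert (b (playGame b p init t)) (playGame b p init t).colored := by
  simp only [playGame, Board.colored]
  split_ifs <;> simp only [insert_union, union_insert]

theorem finite_colored_playGame (hinit : init.colored.Finite) (t : ℕ) :
    (playGame b p init t).colored.Finite := by
  induction t with
  | zero => exact hinit
  | succ t ih => exact colored_playGame_succ t ▸ ih.insert _

end Game

section AskInOrder

open Classical in
noncomputable def freshEdge (B : Board) : Sym2 ℕ :=
  if h : ∃ e : Sym2 ℕ, ¬ e.IsDiag ∧ e ∉ B.colored then h.choose else s(0, 1)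

theorem freshEdge_spec {B : Board} (hB : B.colored.Finite) :
    ¬ (freshEdge B).IsDiag ∧ freshEdge B ∉ B.colored := by
  have hinf : {e : Sym2 ℕ | ¬ e.IsDiag}.Infinite :=
    infinite_of_injective_forall_mem (f := fun n => s(0, n + 1))
      (fun x y hxy => by simpa using hxy) (fun n => by simp)
  obtain ⟨e, he, he'⟩ := hinf.exists_notMem_finite hB
  have h : ∃ e : Sym2 ℕ, ¬ e.IsDiag ∧ e ∉ B.colored := ⟨e, he, he'⟩
  rw [freshEdge, dif_pos h]
  exact h.choose_spec

/-- The fresh edges asked after round `N` only keep the strategy valid in every later round, as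
`ValidFrom` demands. -/
noncomputable def askInOrder (e : ℕ → Sym2 ℕ) (N : ℕ) : BuilderStrat := fun B =>
  open Classical in
  if h : ∃ t, t < N ∧ e t ∉ B.colored then e (Nat.find h) else freshEdge B

variable {e : ℕ → Sym2 ℕ} {N : ℕ} {init : Board}

theorem askInOrder_spec {B : Board} (hB : B.colored.Finite) (he : ∀ t < N, ¬ (e t).IsDiag) :
    ¬ (askInOrder e N B).IsDiag ∧ askInOrder e N B ∉ B.colored := by
  classical
  unfold askInOrder
  split_ifs with h
  · exact ⟨he _ (Nat.find_spec h).1, (Nat.find_spec h).2⟩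
  · exact freshEdge_spec hB

theorem validFrom_askInOrder (hinit : init.colored.Finite) (he : ∀ t < N, ¬ (e t).IsDiag) :
    ValidFrom (askInOrder e N) init := fun _ t =>
  askInOrder_spec (finite_colored_playGame hinit t) he

variable (he : InjOn e (Iio N)) (hinit : ∀ t < N, e t ∉ init.colored)
include he hinit

theorem askInOrder_eq_of_colored {B : Board} {t : ℕ} (ht : t < N)
    (hB : B.colored = init.colored ∪ e '' Iio t) : askInOrder e N B = e t := by
  classical
  have hfresh : e t ∉ B.colored := by
    rw [hB]
    rintro (h | ⟨s, hs, hst⟩)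
    · exact hinit t ht h
    · exact (he (mem_Iio.2 ((mem_Iio.1 hs).trans ht)) ht hst ▸ hs : t < t).false
  have h : ∃ t, t < N ∧ e t ∉ B.colored := ⟨t, ht, hfresh⟩
  rw [askInOrder, dif_pos h]
  congr 1
  exact (Nat.find_eq_iff h).2 ⟨⟨ht, hfresh⟩, fun s hs ⟨_, hs'⟩ => hs' (hB ▸ Or.inr ⟨s, hs, rfl⟩)⟩

theorem colored_playGame_askInOrder (p : PainterStrat) {t : ℕ} (ht : t ≤ N) :
    (playGame (askInOrder e N) p init t).colored = init.colored ∪ e '' Iio t := by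
  induction t with
  | zero => simp [playGame]
  | succ t ih =>
    rw [colored_playGame_succ, askInOrder_eq_of_colored he hinit ht (ih (by omega)),
      ih (by omega), Iio_add_one_eq_Iic, ← Iio_insert, image_insert_eq, union_insert]

theorem askInOrder_playGame (p : PainterStrat) {t : ℕ} (ht : t < N) :
    askInOrder e N (playGame (askInOrder e N) p init t) = e t :=
  askInOrder_eq_of_colored he hinit ht (colored_playGame_askInOrder he hinit p ht.le)

end AskInOrder

section Cycle

variable {n : ℕ} [NeZero n]

def cycleEdge (c : Fin n → ℕ) (i : Fin n) : Sym2 ℕ := s(c i, c (i + 1))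

variable {c : Fin n → ℕ}

theorem cycleEdge_injective (hn : 3 ≤ n) (hc : Injective c) : Injective (cycleEdge c) := by
  intro i j hij
  rcases Sym2.eq_iff.1 hij with ⟨hij, -⟩ | ⟨hij, hji⟩
  · exact hc hij
  · have hi := hc hij
    have hj := hc hji
    rw [Fin.ext_iff, Fin.val_add_one_eq_ite] at hi hj
    split_ifs at hi hj <;> omega

theorem not_isDiag_cycleEdge (hn : 2 ≤ n) (hc : Injective c) (i : Fin n) :
    ¬ (cycleEdge c i).IsDiag :=
  Sym2.mk_isDiag_iff.not.2 (hc.ne (Fin.ne_add_one hn i))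

theorem hasCopy_cycleGraph {β : Type} {G : SimpleGraph β} (c : Fin n ↪ β)
    (h : ∀ i, G.Adj (c i) (c (i + 1))) : HasCopy (cycleGraph n) G := by
  refine ⟨c, fun i j hij => ?_⟩
  rcases cycleGraph_adj'.1 hij with hij | hij
  · rw [Fin.eq_add_one_of_val_sub_eq_one hij]
    exact (h j).symm
  · rw [Fin.eq_add_one_of_val_sub_eq_one hij]
    exact h i

theorem builderWinsIn_redCopy_or_blue_cycleEdge {init : Board} (hn : 3 ≤ n) (hc : Injective c)
    (hfin : init.colored.Finite) (hinit : ∀ i, cycleEdge c i ∉ init.colored) :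
    BuilderWinsIn init
      (fun B => RedCopy (cycleGraph n) B ∨ init.2 ⊆ B.2 ∧ ∃ i, cycleEdge c i ∈ B.2) n := by
  set e : ℕ → Sym2 ℕ := fun t => cycleEdge c (Fin.ofNat n t)
  have he : InjOn e (Iio n) := fun s hs t ht hst => by
    simpa [Fin.ext_iff, Nat.mod_eq_of_lt (mem_Iio.1 hs), Nat.mod_eq_of_lt (mem_Iio.1 ht)]
      using cycleEdge_injective hn hc hst
  have hask := askInOrder_playGame he (fun t _ => hinit _)
  refine ⟨askInOrder e n,
    validFrom_askInOrder hfin (fun t _ => not_isDiag_cycleEdge (by omega) hc _), fun p => ?_⟩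
  set B := playGame (askInOrder e n) p init
  by_cases hblue : ∃ t < n, p (B t) (askInOrder e n (B t)) = false
  · obtain ⟨t, ht, hpt⟩ := hblue
    refine ⟨t + 1, ht, Or.inr ⟨playGame_snd_mono (Nat.zero_le _), Fin.ofNat n t, ?_⟩⟩
    have hmem := mem_snd_playGame_succ hpt
    rwa [hask p ht] at hmem
  · simp only [not_exists, not_and, Bool.not_eq_false] at hblue
    refine ⟨n, le_rfl, Or.inl (hasCopy_cycleGraph ⟨c, hc⟩ fun i => ?_)⟩
    have hred := mem_fst_playGame_succ (hblue i i.isLt)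
    rw [hask p i.isLt, show e i = cycleEdge c i by simp [e]] at hred
    exact (fromEdgeSet_adj _).2
      ⟨playGame_fst_mono i.isLt hred, hc.ne (Fin.ne_add_one (by omega) i)⟩

end Cycle

section HalfPaths

variable {u v : ℕ → ℕ}

def halfPathsBoard (u v : ℕ → ℕ) (m : ℕ) : Board :=
  (∅, {e | ∃ j : ℕ, j + 1 < m ∧ (e = s(u j, u (j + 1)) ∨ e = s(v j, v (j + 1)))})

theorem finite_colored_halfPathsBoard (m : ℕ) : (halfPathsBoard u v m).colored.Finite := by
  refine (((finite_Iio m).image fun j => s(u j, u (j + 1))).union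
    ((finite_Iio m).image fun j => s(v j, v (j + 1)))).subset ?_
  rintro e (he | ⟨j, hj, rfl | rfl⟩)
  · exact he.elim
  · exact Or.inl ⟨j, mem_Iio.2 (by omega), rfl⟩
  · exact Or.inr ⟨j, mem_Iio.2 (by omega), rfl⟩

variable {m : ℕ} (hdisj : ∀ x y, x < m → y < m → u x ≠ v y)
include hdisj

theorem cross_edge_notMem_colored_halfPathsBoard {a b : ℕ} (ha : a < m) (hb : b < m) :
    s(u a, v b) ∉ (halfPathsBoard u v m).colored := by
  rintro (he | ⟨j, hj, he | he⟩)
  · exact he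
  · rcases Sym2.eq_iff.1 he with ⟨-, h⟩ | ⟨-, h⟩
    exacts [hdisj _ _ (by omega) hb h.symm, hdisj _ _ (by omega) hb h.symm]
  · rcases Sym2.eq_iff.1 he with ⟨h, -⟩ | ⟨h, -⟩
    exacts [hdisj _ _ ha (by omega) h, hdisj _ _ ha (by omega) h]

theorem exists_bluePath_of_cross_edge (hu : ∀ x y, x < m → y < m → u x = u y → x = y)
    (hv : ∀ x y, x < m → y < m → v x = v y → x = y) {a b : ℕ} (ha : a < m) (hb : b < m)
    (hab : a + b ≤ m) {B : Board} (hB : (halfPathsBoard u v m).2 ⊆ B.2)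
    (hE : s(u a, v b) ∈ B.2) :
    ∃ s : ℕ, m ≤ s ∧ ∃ g : ℕ → ℕ,
      (∀ x y, x < s → y < s → g x = g y → x = y) ∧
      (∀ j, j + 1 < s → s(g j, g (j + 1)) ∈ B.2) ∧
      (∀ x, x < s → ∃ j, j < m ∧ (g x = u j ∨ g x = v j)) ∧
      g 0 = u (m - 1) ∧ g (s - 1) = v (m - 1) := by
  set g : ℕ → ℕ := fun j => if j < m - a then u (m - 1 - j) else v (j + a + b - m)
  have hgu : ∀ j < m - a, g j = u (m - 1 - j) := fun j hj => if_pos hj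
  have hgv : ∀ j, m - a ≤ j → g j = v (j + a + b - m) := fun j hj => if_neg (by omega)
  have hP : ∀ i, i + 1 < m → s(u (i + 1), u i) ∈ B.2 :=
    fun i hi => hB ⟨i, hi, Or.inl Sym2.eq_swap⟩
  have hQ : ∀ i, i + 1 < m → s(v i, v (i + 1)) ∈ B.2 := fun i hi => hB ⟨i, hi, Or.inr rfl⟩
  refine ⟨2 * m - a - b, by omega, g, fun x y hx hy hxy => ?_, fun j hj => ?_, fun x hx => ?_,
    by rw [hgu 0 (by omega), Nat.sub_zero], by rw [hgv _ (by omega)]; congr 1; omega⟩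
  · rcases Nat.lt_or_ge x (m - a) with hx' | hx' <;> rcases Nat.lt_or_ge y (m - a) with hy' | hy'
    · rw [hgu x hx', hgu y hy'] at hxy
      have := hu _ _ (by omega) (by omega) hxy
      omega
    · rw [hgu x hx', hgv y hy'] at hxy
      exact (hdisj _ _ (by omega) (by omega) hxy).elim
    · rw [hgv x hx', hgu y hy'] at hxy
      exact (hdisj _ _ (by omega) (by omega) hxy.symm).elim
    · rw [hgv x hx', hgv y hy'] at hxy
      have := hv _ _ (by omega) (by omega) hxy
      omega
  · rcases Nat.lt_or_ge (j + 1) (m - a) with h | h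
    · rw [hgu j (by omega), hgu (j + 1) h, show m - 1 - j = m - 1 - (j + 1) + 1 by omega]
      exact hP _ (by omega)
    · rcases Nat.lt_or_ge j (m - a) with h' | h'
      · rwa [hgu j h', hgv (j + 1) h, show m - 1 - j = a by omega,
          show j + 1 + a + b - m = b by omega]
      · rw [hgv j h', hgv (j + 1) h, show j + 1 + a + b - m = j + a + b - m + 1 by omega]
        exact hQ _ (by omega)
  · rcases Nat.lt_or_ge x (m - a) with hx' | hx'
    · exact ⟨m - 1 - x, by omega, Or.inl (hgu x hx')⟩
    · exact ⟨x + a + b - m, by omega, Or.inr (hgv x hx')⟩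

end HalfPaths

section Zigzag

variable {u v : ℕ → ℕ} {k : ℕ}

def zigzag (u v : ℕ → ℕ) (k : ℕ) (i : Fin k) : ℕ :=
  if (i : ℕ) % 2 = 0 then v (i / 2) else u (k / 2 - 1 - i / 2)

theorem zigzag_injective (hk : Even k)
    (hu : ∀ x y, x < k / 2 → y < k / 2 → u x = u y → x = y)
    (hv : ∀ x y, x < k / 2 → y < k / 2 → v x = v y → x = y)
    (hdisj : ∀ x y, x < k / 2 → y < k / 2 → u x ≠ v y) : Injective (zigzag u v k) := by
  have hk2 := Nat.even_iff.1 hk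
  intro i j hij
  have hi := i.isLt
  have hj := j.isLt
  unfold zigzag at hij
  split_ifs at hij with h h'
  · have := hv _ _ (by omega) (by omega) hij
    exact Fin.ext (by omega)
  · exact (hdisj _ _ (by omega) (by omega) hij.symm).elim
  · exact (hdisj _ _ (by omega) (by omega) hij).elim
  · have := hu _ _ (by omega) (by omega) hij
    exact Fin.ext (by omega)

theorem cycleEdge_zigzag [NeZero k] (hk : Even k) (i : Fin k) :
    ∃ a b, a < k / 2 ∧ b < k / 2 ∧ a + b ≤ k / 2 ∧ cycleEdge (zigzag u v k) i = s(u a, v b) := by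
  have hk2 := Nat.even_iff.1 hk
  have hi := i.isLt
  unfold cycleEdge zigzag
  rw [Fin.val_add_one_eq_ite]
  split_ifs <;> first
    | omega
    | exact ⟨_, _, by omega, by omega, by omega, rfl⟩
    | exact ⟨_, _, by omega, by omega, by omega, Sym2.eq_swap⟩

end Zigzag

/-- Joining two blue half-paths (even `k`): given two vertex-disjoint blue paths on
`k/2` vertices each, with chosen endpoints `p = u (k/2 - 1)` and `q = v (k/2 - 1)`,
within `k` rounds Builder can force a red `C_k` or a blue path on at least `k/2`
vertices of `V(P) ∪ V(Q)` with endpoints `p` and `q`. -/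
theorem join_two_half_paths_even (k : ℕ) (hk : 4 ≤ k) (hke : Even k)
    (u v : ℕ → ℕ)
    (hu : ∀ x y, x < k / 2 → y < k / 2 → u x = u y → x = y)
    (hv : ∀ x y, x < k / 2 → y < k / 2 → v x = v y → x = y)
    (hdisj : ∀ x y, x < k / 2 → y < k / 2 → u x ≠ v y) :
    BuilderWinsIn
      (∅, {e | ∃ j : ℕ, j + 1 < k / 2 ∧
        (e = s(u j, u (j + 1)) ∨ e = s(v j, v (j + 1)))})
      (fun B => RedCopy (SimpleGraph.cycleGraph k) B ∨
        ∃ s : ℕ, k / 2 ≤ s ∧ ∃ g : ℕ → ℕ,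
          (∀ a c, a < s → c < s → g a = g c → a = c) ∧
          (∀ j, j + 1 < s → s(g j, g (j + 1)) ∈ B.2) ∧
          (∀ a, a < s → ∃ j, j < k / 2 ∧ (g a = u j ∨ g a = v j)) ∧
          g 0 = u (k / 2 - 1) ∧ g (s - 1) = v (k / 2 - 1))
      k := by
  have : NeZero k := ⟨by omega⟩
  have hcross := cycleEdge_zigzag (u := u) (v := v) hke
  refine (builderWinsIn_redCopy_or_blue_cycleEdge (init := halfPathsBoard u v (k / 2))
    (by omega) (zigzag_injective hke hu hv hdisj) (finite_colored_halfPathsBoard _)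
    fun i => ?_).mono ?_
  · obtain ⟨a, b, ha, hb, -, he⟩ := hcross i
    exact he ▸ cross_edge_notMem_colored_halfPathsBoard hdisj ha hb
  · rintro B (hred | ⟨hinit, i, hi⟩)
    · exact Or.inl hred
    · obtain ⟨a, b, ha, hb, hab, he⟩ := hcross i
      exact Or.inr (exists_bluePath_of_cross_edge hdisj hu hv ha hb hab hinit (he ▸ hi))
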